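/- arXiv:2301.09139 — 8 statements merged into one kernel-verified Lean document; each statement's English description precedes it below -/
import Mathlib

section
/- Let A be an (associative, not necessarily commutative) algebra over the complex numbers and let (D₁, d₁) and (D₂, d₂) be generalized derivations on A. If the pair (D₁∘D₂, d₁∘d₂) is again a generalized derivation on A, then both maps d₁∘D₂ and d₂∘D₁ send A into the nilradical nil(A) of A. -/
/-- An additive map `d : R → R` with `d (x*y) = d x * y + x * d y` is a derivation. -/
def IsDerivation {R : Type*} [Ring R] (d : R → R) : Prop :=
  (∀ x y, d (x + y) = d x + d y) ∧ (∀ x y, d (x * y) = d x * y + x * d y)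

/-- A generalized derivation `(D, d)`: `D` additive, `d` a derivation, and
`D (x*y) = D x * y + x * d y`. -/
def IsGenDerivation {R : Type*} [Ring R] (D d : R → R) : Prop :=
  (∀ x y, D (x + y) = D x + D y) ∧ IsDerivation d ∧ (∀ x y, D (x * y) = D x * y + x * d y)

/-- A proper two-sided ideal `P` (given as a set) which is prime:
`x R y ⊆ P` implies `x ∈ P` or `y ∈ P`. -/
def IsPrimeTwoSidedIdeal {A : Type*} [Ring A] (P : Set A) : Prop :=
  (0 : A) ∈ P ∧ (∀ x y, x ∈ P → y ∈ P → x + y ∈ P) ∧ (∀ x, x ∈ P → -x ∈ P) ∧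
    (∀ x r, x ∈ P → x * r ∈ P) ∧ (∀ x r, x ∈ P → r * x ∈ P) ∧
    P ≠ Set.univ ∧ (∀ x y : A, (∀ r, x * r * y ∈ P) → x ∈ P ∨ y ∈ P)

/-- The nilradical of `A`: the intersection of all prime two-sided ideals of `A`. -/
def nilRad (A : Type*) [Ring A] : Set A :=
  ⋂ P ∈ {P : Set A | IsPrimeTwoSidedIdeal P}, P

/-! Expanding `D₁ (D₂ (x * y))` gives `D₂ x * y * d₁ z + D₁ x * y * d₂ z = 0`, and likewise with
`dᵢ` in place of `Dᵢ`. Modulo a prime ideal `P`, an identity `μ a * x * ν b + ν a * x * μ b ≡ 0`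
(with `2` invertible) forces `μ ≡ 0` or `ν ≡ 0`. So one of `d₁`, `d₂` vanishes mod `P`, say `d₂`;
if `d₁` does not, then `D₂` and `d₁ ∘ d₂` vanish mod `P`, and applying `d₁` to the identity for
`D₁`, `D₂` leaves `d₁ (D₂ x) * y * d₁ z ∈ P` for all `y`, whence `d₁ (D₂ x) ∈ P`. -/

namespace IsPrimeTwoSidedIdeal

variable {A : Type*} [Ring A] {P : Set A}

theorem zero_mem (hP : IsPrimeTwoSidedIdeal P) : (0 : A) ∈ P := hP.1

theorem add_mem (hP : IsPrimeTwoSidedIdeal P) {a b : A} (ha : a ∈ P) (hb : b ∈ P) :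
    a + b ∈ P :=
  hP.2.1 a b ha hb

theorem sub_mem (hP : IsPrimeTwoSidedIdeal P) {a b : A} (ha : a ∈ P) (hb : b ∈ P) :
    a - b ∈ P := by
  rw [sub_eq_add_neg]
  exact hP.add_mem ha (hP.2.2.1 b hb)

theorem mul_mem_right (hP : IsPrimeTwoSidedIdeal P) {a : A} (b : A) (ha : a ∈ P) : a * b ∈ P :=
  hP.2.2.2.1 a b ha

theorem mul_mem_left (hP : IsPrimeTwoSidedIdeal P) (a : A) {b : A} (hb : b ∈ P) : a * b ∈ P :=
  hP.2.2.2.2.1 b a hb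

theorem mem_of_add_mem (hP : IsPrimeTwoSidedIdeal P) {a b : A} (hab : a + b ∈ P) (hb : b ∈ P) :
    a ∈ P := by
  simpa using hP.sub_mem hab hb

theorem mem_of_add_eq_zero {a b : A} (hP : IsPrimeTwoSidedIdeal P) (hab : a + b = 0)
    (hb : b ∈ P) : a ∈ P :=
  hP.mem_of_add_mem (hab ▸ hP.zero_mem) hb

theorem mem_of_two_mul_mem (hP : IsPrimeTwoSidedIdeal P) (h2 : IsUnit (2 : A)) {a : A}
    (ha : 2 * a ∈ P) : a ∈ P := by
  obtain ⟨u, hu⟩ := h2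
  have h : a = ↑u⁻¹ * (2 * a) := by rw [← hu, ← mul_assoc, Units.inv_mul, one_mul]
  rw [h]
  exact hP.mul_mem_left _ ha

theorem mem_of_forall_mul_mul_mem (hP : IsPrimeTwoSidedIdeal P) {a b : A} (hb : b ∉ P)
    (h : ∀ y, a * y * b ∈ P) : a ∈ P :=
  (hP.2.2.2.2.2.2 a b h).resolve_right hb

/-- With `S = ν a * x * μ b * y * μ b`, the hypothesis applied in three ways gives
`S ≡ -μ a * x * ν b * y * μ b ≡ μ a * x * μ b * y * ν b ≡ -S`, so `2 S ∈ P`. -/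
theorem forall_mem_or_forall_mem_of_skew (hP : IsPrimeTwoSidedIdeal P) (h2 : IsUnit (2 : A))
    (μ ν : A → A) (H : ∀ a x b, μ a * x * ν b + ν a * x * μ b ∈ P) :
    (∀ a, μ a ∈ P) ∨ (∀ a, ν a ∈ P) := by
  refine or_iff_not_imp_left.2 fun hμ a => ?_
  push Not at hμ
  obtain ⟨b, hb⟩ := hμ
  have hS : ∀ x y, ν a * x * μ b * y * μ b ∈ P := by
    intro x y
    refine hP.mem_of_two_mul_mem h2 ?_
    have e : 2 * (ν a * x * μ b * y * μ b)
        = (μ a * x * ν b + ν a * x * μ b) * (y * μ b)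
          - μ a * x * (μ b * y * ν b + ν b * y * μ b)
          + (μ a * (x * μ b * y) * ν b + ν a * (x * μ b * y) * μ b) := by
      noncomm_ring
    rw [e]
    exact hP.add_mem (hP.sub_mem (hP.mul_mem_right _ (H a x b)) (hP.mul_mem_left _ (H b y b)))
      (H a _ b)
  exact hP.mem_of_forall_mul_mul_mem hb fun x => hP.mem_of_forall_mul_mul_mem hb (hS x)

end IsPrimeTwoSidedIdeal

theorem mem_nilRad_iff {A : Type*} [Ring A] {x : A} :
    x ∈ nilRad A ↔ ∀ P, IsPrimeTwoSidedIdeal P → x ∈ P :=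
  Set.mem_iInter₂

section Derivations

variable {A : Type*} [Ring A]

theorem IsDerivation.map_zero {d : A → A} (hd : IsDerivation d) : d 0 = 0 := by
  simpa using hd.1 0 0

theorem IsDerivation.isGenDerivation {d : A → A} (hd : IsDerivation d) : IsGenDerivation d d :=
  ⟨hd.1, hd, hd.2⟩

theorem IsGenDerivation.mul_add_mul_eq_zero_of_comp {D₁ d₁ D₂ d₂ : A → A}
    (h₁ : IsGenDerivation D₁ d₁) (h₂ : IsGenDerivation D₂ d₂)
    (h : IsGenDerivation (fun x => D₁ (D₂ x)) (fun x => d₁ (d₂ x))) (x y : A) :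
    D₂ x * d₁ y + D₁ x * d₂ y = 0 := by
  have e := sub_eq_zero.2 (h.2.2 x y)
  simp only [h₂.2.2, h₁.1, h₁.2.2] at e
  rw [← e]
  abel

theorem mul_mul_add_mul_mul_eq_zero {d₁ d₂ F G : A → A} (hd₁ : IsDerivation d₁)
    (hd₂ : IsDerivation d₂) (hFG : ∀ x y, F x * d₁ y + G x * d₂ y = 0) (x y z : A) :
    F x * y * d₁ z + G x * y * d₂ z = 0 := by
  have e := congrArg₂ (· - ·) (hFG x (y * z)) (congrArg (· * z) (hFG x y))
  simp only [hd₁.2, hd₂.2, zero_mul, sub_zero] at e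
  rw [← e]
  noncomm_ring

theorem IsDerivation.apply_mul_mul_add_mul_mul_eq_zero {d d₁ d₂ F G : A → A}
    (hd : IsDerivation d) (hFG : ∀ x y z, F x * y * d₁ z + G x * y * d₂ z = 0) (x y z : A) :
    d (F x) * y * d₁ z + G x * y * d (d₂ z) + (F x * y * d (d₁ z) + d (G x) * y * d₂ z) = 0 := by
  have e := congrArg₂ (· - ·) (congrArg d (hFG x y z)) (hFG x (d y) z)
  simp only [hd.1, hd.2, hd.map_zero, sub_zero] at e
  rw [← e]
  noncomm_ring

end Derivations

theorem IsPrimeTwoSidedIdeal.comp_mem_of_forall_mem {A : Type*} [Ring A] {P : Set A}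
    (hP : IsPrimeTwoSidedIdeal P) (h2 : IsUnit (2 : A)) {D₁ d₁ D₂ d₂ : A → A}
    (hd₁ : IsDerivation d₁)
    (hD : ∀ x y z, D₂ x * y * d₁ z + D₁ x * y * d₂ z = 0)
    (hd : ∀ x y z, d₂ x * y * d₁ z + d₁ x * y * d₂ z = 0)
    (hd₂P : ∀ a, d₂ a ∈ P) (x : A) : d₁ (D₂ x) ∈ P := by
  by_cases hd₁P : ∀ a, d₁ a ∈ P
  · exact hd₁P _
  push Not at hd₁P
  obtain ⟨z, hz⟩ := hd₁P
  have hD₂P : ∀ a, D₂ a ∈ P := fun a => hP.mem_of_forall_mul_mul_mem hz fun y =>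
    hP.mem_of_add_eq_zero (hD a y z) (hP.mul_mem_left _ (hd₂P z))
  have hd₁d₂P : ∀ a, d₁ (d₂ a) ∈ P := by
    refine (hP.forall_mem_or_forall_mem_of_skew h2 (fun a => d₁ (d₂ a)) d₁ fun a y b => ?_)
      |>.resolve_right fun h => hz (h z)
    refine hP.mem_of_add_eq_zero (hd₁.apply_mul_mul_add_mul_mul_eq_zero hd a y b) ?_
    exact hP.add_mem (hP.mul_mem_right _ (hP.mul_mem_right _ (hd₂P a)))
      (hP.mul_mem_left _ (hd₂P b))
  refine hP.mem_of_forall_mul_mul_mem hz fun y => hP.mem_of_add_mem ?_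
    (hP.mul_mem_left (D₁ x * y) (hd₁d₂P z))
  refine hP.mem_of_add_eq_zero (hd₁.apply_mul_mul_add_mul_mul_eq_zero hD x y z) ?_
  exact hP.add_mem (hP.mul_mem_right _ (hP.mul_mem_right _ (hD₂P x)))
    (hP.mul_mem_left _ (hd₂P z))

theorem stmt1 {A : Type*} [Ring A] [Algebra ℂ A]
    (D₁ d₁ D₂ d₂ : A → A)
    (h₁ : IsGenDerivation D₁ d₁) (h₂ : IsGenDerivation D₂ d₂)
    (h : IsGenDerivation (fun x => D₁ (D₂ x)) (fun x => d₁ (d₂ x))) :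
    ∀ x : A, d₁ (D₂ x) ∈ nilRad A ∧ d₂ (D₁ x) ∈ nilRad A := by
  have h2 : IsUnit (2 : A) := by
    simpa only [map_ofNat] using (isUnit_of_invertible (2 : ℂ)).map (algebraMap ℂ A)
  have hd₁ := h₁.2.1
  have hd₂ := h₂.2.1
  have hD := mul_mul_add_mul_mul_eq_zero hd₁ hd₂ (h₁.mul_add_mul_eq_zero_of_comp h₂ h)
  have hd := mul_mul_add_mul_mul_eq_zero hd₁ hd₂
    (hd₁.isGenDerivation.mul_add_mul_eq_zero_of_comp hd₂.isGenDerivation h.2.1.isGenDerivation)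
  have hD' : ∀ x y z, D₁ x * y * d₂ z + D₂ x * y * d₁ z = 0 := fun x y z =>
    (add_comm _ _).trans (hD x y z)
  have hd' : ∀ x y z, d₁ x * y * d₂ z + d₂ x * y * d₁ z = 0 := fun x y z =>
    (add_comm _ _).trans (hd x y z)
  intro x
  suffices hx : ∀ P, IsPrimeTwoSidedIdeal P → d₁ (D₂ x) ∈ P ∧ d₂ (D₁ x) ∈ P from
    ⟨mem_nilRad_iff.2 fun P hP => (hx P hP).1, mem_nilRad_iff.2 fun P hP => (hx P hP).2⟩
  intro P hP
  rcases hP.forall_mem_or_forall_mem_of_skew h2 d₂ d₁ fun a y b => (hd a y b).symm ▸ hP.zero_mem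
    with hd₂P | hd₁P
  · exact ⟨hP.comp_mem_of_forall_mem h2 hd₁ hD hd hd₂P x, hd₂P _⟩
  · exact ⟨hd₁P _, hP.comp_mem_of_forall_mem h2 hd₂ hD' hd' hd₁P x⟩
end

section
/- Let A be an (associative, not necessarily commutative) algebra over the complex numbers, let (D₁, d₁) and (D₂, d₂) be generalized derivations on A, and let α ∈ ℂ. Then the pair (αD₁³ + D₁∘D₂, αd₁³ + d₁∘d₂) is a generalized derivation on A if and only if 3αD₁²(x)d₁(y) + 3αD₁(x)d₁²(y) + D₂(x)d₁(y) + D₁(x)d₂(y) = 0 for all x, y ∈ A. -/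
section GenDerivation

variable {R : Type*} [Ring R]

theorem isGenDerivation_iff_map_mul {D d : R → R} (hadd : ∀ x y, D (x + y) = D x + D y) :
    IsGenDerivation D d ↔ ∀ x y, D (x * y) = D x * y + x * d y := by
  refine ⟨fun h => h.2.2, fun hmul => ?_⟩
  have hd : ∀ z, d z = D z - D 1 * z := fun z => by
    have h1z := hmul 1 z
    rw [one_mul, one_mul] at h1z
    rw [h1z, add_sub_cancel_left]
  refine ⟨hadd, ⟨fun x y => ?_, fun x y => ?_⟩, hmul⟩
  · rw [hd, hd x, hd y, hadd, mul_add]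
    abel
  · rw [hd (x * y), hmul, hd x, hd y]
    noncomm_ring

theorem apply_apply_mul {D₁ d₁ D₂ d₂ : R → R} (hadd₁ : ∀ x y, D₁ (x + y) = D₁ x + D₁ y)
    (hmul₁ : ∀ x y, D₁ (x * y) = D₁ x * y + x * d₁ y)
    (hmul₂ : ∀ x y, D₂ (x * y) = D₂ x * y + x * d₂ y) (x y : R) :
    D₁ (D₂ (x * y)) = D₁ (D₂ x) * y + D₂ x * d₁ y + D₁ x * d₂ y + x * d₁ (d₂ y) := by
  rw [hmul₂, hadd₁, hmul₁, hmul₁]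
  abel

theorem apply_apply_apply_mul {D d : R → R} (hadd : ∀ x y, D (x + y) = D x + D y)
    (hmul : ∀ x y, D (x * y) = D x * y + x * d y) (x y : R) :
    D (D (D (x * y))) = D (D (D x)) * y + 3 • (D (D x) * d y) + 3 • (D x * d (d y)) +
      x * d (d (d y)) := by
  simp only [hmul, hadd]
  abel

theorem map_mul_smul_cube_add_comp {k : Type*} [CommSemiring k] [Algebra k R]
    {D₁ d₁ D₂ d₂ : R → R} (hadd₁ : ∀ x y, D₁ (x + y) = D₁ x + D₁ y)
    (hmul₁ : ∀ x y, D₁ (x * y) = D₁ x * y + x * d₁ y)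
    (hmul₂ : ∀ x y, D₂ (x * y) = D₂ x * y + x * d₂ y) (α : k) (x y : R) :
    α • D₁ (D₁ (D₁ (x * y))) + D₁ (D₂ (x * y)) =
      (α • D₁ (D₁ (D₁ x)) + D₁ (D₂ x)) * y + x * (α • d₁ (d₁ (d₁ y)) + d₁ (d₂ y)) +
      ((3 * α) • (D₁ (D₁ x) * d₁ y) + (3 * α) • (D₁ x * d₁ (d₁ y)) +
        D₂ x * d₁ y + D₁ x * d₂ y) := by
  rw [apply_apply_apply_mul hadd₁ hmul₁, apply_apply_mul hadd₁ hmul₁ hmul₂]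
  simp only [mul_add, add_mul, smul_add, smul_mul_assoc, mul_smul_comm]
  module

end GenDerivation

theorem stmt3 {A : Type*} [Ring A] [Algebra ℂ A]
    (D₁ d₁ D₂ d₂ : A → A) (α : ℂ)
    (h₁ : IsGenDerivation D₁ d₁) (h₂ : IsGenDerivation D₂ d₂) :
    IsGenDerivation (fun x => α • D₁ (D₁ (D₁ x)) + D₁ (D₂ x))
        (fun x => α • d₁ (d₁ (d₁ x)) + d₁ (d₂ x)) ↔
      ∀ x y : A, (3 * α) • (D₁ (D₁ x) * d₁ y) + (3 * α) • (D₁ x * d₁ (d₁ y)) +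
        D₂ x * d₁ y + D₁ x * d₂ y = 0 := by
  obtain ⟨hadd₁, -, hmul₁⟩ := h₁
  obtain ⟨hadd₂, -, hmul₂⟩ := h₂
  have hadd : ∀ x y : A, α • D₁ (D₁ (D₁ (x + y))) + D₁ (D₂ (x + y)) =
      (α • D₁ (D₁ (D₁ x)) + D₁ (D₂ x)) + (α • D₁ (D₁ (D₁ y)) + D₁ (D₂ y)) := fun x y => by
    simp only [hadd₁, hadd₂, smul_add]
    abel
  rw [isGenDerivation_iff_map_mul hadd]
  refine forall₂_congr fun x y => ?_
  rw [map_mul_smul_cube_add_comp hadd₁ hmul₁ hmul₂, add_eq_left]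
end

section
/- Let R be a ring and let d₁ and d₂ be derivations on R. If the map d₁² + d₁∘d₂ is again a derivation on R, then 2d₁(x)d₁(y) + d₂(x)d₁(y) + d₁(x)d₂(y) = 0 for all x, y ∈ R. -/
/-! Writing `d₁² + d₁d₂ = d₁ ∘ (d₁ + d₂)`, the claim is the case `d = d₁`, `δ = d₁ + d₂` of a
general fact: the composite `d ∘ δ` of two derivations satisfies the Leibniz rule up to the
defect `δ x * d y + d x * δ y`, so if `d ∘ δ` is a derivation this defect vanishes. -/

namespace IsDerivation

variable {R : Type*} [Ring R] {d δ : R → R}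

theorem add (hd : IsDerivation d) (hδ : IsDerivation δ) :
    IsDerivation (fun x => d x + δ x) := by
  refine ⟨fun x y => ?_, fun x y => ?_⟩
  · simp only [hd.1, hδ.1]; abel
  · simp only [hd.2, hδ.2]; noncomm_ring

theorem apply_apply_mul (hd : IsDerivation d) (hδ : IsDerivation δ) (x y : R) :
    d (δ (x * y)) = d (δ x) * y + x * d (δ y) + (δ x * d y + d x * δ y) := by
  rw [hδ.2, hd.1, hd.2, hd.2]
  abel

theorem mul_add_mul_eq_zero_of_comp (hd : IsDerivation d) (hδ : IsDerivation δ)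
    (hdδ : IsDerivation (fun x => d (δ x))) (x y : R) :
    δ x * d y + d x * δ y = 0 := by
  have h : d (δ (x * y)) = d (δ x) * y + x * d (δ y) := hdδ.2 x y
  rw [apply_apply_mul hd hδ] at h
  simpa using h

end IsDerivation

theorem stmt6 {R : Type*} [Ring R] (d₁ d₂ : R → R)
    (h₁ : IsDerivation d₁) (h₂ : IsDerivation d₂)
    (h : IsDerivation (fun x => d₁ (d₁ x) + d₁ (d₂ x))) :
    ∀ x y : R, 2 * (d₁ x * d₁ y) + d₂ x * d₁ y + d₁ x * d₂ y = 0 := by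
  intro x y
  have hcomp : IsDerivation (fun x => d₁ (d₁ x + d₂ x)) := by
    simpa only [h₁.1] using h
  have hdefect := h₁.mul_add_mul_eq_zero_of_comp (h₁.add h₂) hcomp x y
  linear_combination (norm := noncomm_ring) hdefect
end

section
/- Let R be a prime ring of characteristic different from 2 and let d₁ and d₂ be derivations on R. If the map d₁² + d₁∘d₂ is again a derivation on R, then d₁(z)d₂(y) = d₂(z)d₁(y) for all y, z ∈ R. -/
/-!
Put `e = d₁ + d₂`, so that `d₁² + d₁d₂ = d₁ ∘ e`. Expanding `d₁ (e (x * y))` shows that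
`d₁ ∘ e` is a derivation exactly when `e x * d₁ y + d₁ x * e y = 0`; replacing `x` by `x * z`
upgrades this to `e x * z * d₁ y + d₁ x * z * e y = 0`. Three instances of the latter give
`2 * (d₁ x * z * (d₁ y * w * e x')) = 0` for all `z, w`, and `char R ≠ 2` together with
primeness then forces `e x * d₁ y = 0`. Feeding this back into the first identity yields the
claim.
-/

section

variable {R : Type*} [Ring R] {d e : R → R}

theorem IsDerivation.add_s7 (hd : IsDerivation d) (he : IsDerivation e) :
    IsDerivation (fun x => d x + e x) := by
  refine ⟨fun x y => ?_, fun x y => ?_⟩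
  · simp only [hd.1, he.1]; abel
  · simp only [hd.2, he.2]; noncomm_ring

theorem IsDerivation.mul_add_mul_eq_zero_of_comp_s7 (hd : IsDerivation d) (he : IsDerivation e)
    (hde : IsDerivation (d ∘ e)) (x y : R) : e x * d y + d x * e y = 0 := by
  have hexp : d (e (x * y)) = d (e x) * y + e x * d y + (d x * e y + x * d (e y)) := by
    rw [he.2, hd.1, hd.2, hd.2]
  have hleib : d (e (x * y)) = d (e x) * y + x * d (e y) := hde.2 x y
  linear_combination (norm := noncomm_ring) hleib - hexp

theorem IsDerivation.mul_mul_add_mul_mul_eq_zero (hd : IsDerivation d) (he : IsDerivation e)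
    (hde : ∀ x y, e x * d y + d x * e y = 0) (x z y : R) :
    e x * z * d y + d x * z * e y = 0 := by
  have hxz := hde (x * z) y
  rw [hd.2, he.2] at hxz
  linear_combination (norm := noncomm_ring) hxz - x * hde z y

theorem mul_mul_mul_mul_eq_zero_of_forall_mul_mul_add_mul_mul_eq_zero
    (hchar : ∀ x : R, 2 * x = 0 → x = 0)
    (hde : ∀ x z y, e x * z * d y + d x * z * e y = 0) (x z y w x' : R) :
    d x * z * (d y * w * e x') = 0 := by
  refine hchar _ ?_
  -- `h₂` and `h₃` turn `e x * z * d y * w * d x'` into the target, `h₁` into its negative.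
  have h₁ := hde x (z * d y * w) x'
  have h₂ := congrArg (· * (w * d x')) (hde x z y)
  have h₃ := congrArg (d x * z * ·) (hde y w x')
  simp only [zero_mul, mul_zero] at h₂ h₃
  linear_combination (norm := noncomm_ring) h₃ - h₂ + h₁

theorem mul_eq_zero_of_forall_mul_mul_mul_mul_eq_zero
    (hprime : ∀ x y : R, (∀ r : R, x * r * y = 0) → x = 0 ∨ y = 0) {a b : R}
    (h : ∀ z w, a * z * (a * w * b) = 0) : b * a = 0 := by
  have hab : ∀ w, a * w * b = 0 := fun w => by
    rcases hprime a _ (h · w) with rfl | hb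
    · simp
    · exact hb
  rcases hprime a b hab with rfl | rfl <;> simp

end

theorem stmt7 {R : Type*} [Ring R]
    (hprime : ∀ x y : R, (∀ r : R, x * r * y = 0) → x = 0 ∨ y = 0)
    (hchar : ∀ x : R, 2 * x = 0 → x = 0)
    (d₁ d₂ : R → R)
    (h₁ : IsDerivation d₁) (h₂ : IsDerivation d₂)
    (h : IsDerivation (fun x => d₁ (d₁ x) + d₁ (d₂ x))) :
    ∀ y z : R, d₁ z * d₂ y = d₂ z * d₁ y := by
  have he := h₁.add_s7 h₂
  have hcomp : d₁ ∘ (fun x => d₁ x + d₂ x) = fun x => d₁ (d₁ x) + d₁ (d₂ x) :=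
    funext fun x => h₁.1 _ _
  have hsum := h₁.mul_add_mul_eq_zero_of_comp_s7 he (hcomp ▸ h)
  have hsandwich := h₁.mul_mul_add_mul_mul_eq_zero he hsum
  have hvanish : ∀ x y, (d₁ x + d₂ x) * d₁ y = 0 := fun x y =>
    mul_eq_zero_of_forall_mul_mul_mul_mul_eq_zero hprime fun z w =>
      mul_mul_mul_mul_eq_zero_of_forall_mul_mul_add_mul_mul_eq_zero hchar hsandwich y z y w x
  intro y z
  linear_combination (norm := noncomm_ring) hsum z y - 2 * hvanish z y
end

section
/- Let R be a prime ring of characteristic different from 2 and let d₁ and d₂ be derivations on R. If the map d₁² + d₁∘d₂ is again a derivation on R, then (d₁(z) + d₂(z)) · x · d₁(y) = 0 for all x, y, z ∈ R. -/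
/-!
Expanding `(d₁² + d₁d₂)(xy)` and comparing with the Leibniz rule leaves the cross terms
`2 d₁x d₁y + d₂x d₁y + d₁x d₂y = 0`. Replacing `y` by `yw` turns this into
`(2 d₁x + d₂x) y d₁w + d₁x y d₂w = 0`, a functional identity from which one eliminates the
first summand: `d₁x · R · (d₁u r d₂w - d₂u r d₁w) = 0`. In a prime ring either `d₁ = 0` or
`d₁u r d₂w = d₂u r d₁w`; substituting the latter back gives `2 (d₁z + d₂z) x d₁y = 0`.
-/

section

variable {R : Type*} [Ring R]

theorem IsDerivation.cross_terms_eq_zero {d₁ d₂ : R → R}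
    (h₁ : IsDerivation d₁) (h₂ : IsDerivation d₂)
    (h : IsDerivation (fun x => d₁ (d₁ x) + d₁ (d₂ x))) (x y : R) :
    2 * (d₁ x * d₁ y) + d₂ x * d₁ y + d₁ x * d₂ y = 0 := by
  obtain ⟨add₁, mul₁⟩ := h₁
  have e := h.2 x y
  simp only [mul₁, h₂.2, add₁] at e
  linear_combination (norm := noncomm_ring) e

theorem IsDerivation.cross_terms_mul_eq_zero {d₁ d₂ : R → R}
    (h₁ : IsDerivation d₁) (h₂ : IsDerivation d₂)
    (H : ∀ x y, 2 * (d₁ x * d₁ y) + d₂ x * d₁ y + d₁ x * d₂ y = 0) (x y w : R) :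
    (2 * d₁ x + d₂ x) * y * d₁ w + d₁ x * y * d₂ w = 0 := by
  have e := H x (y * w)
  rw [h₁.2 y w, h₂.2 y w] at e
  linear_combination (norm := noncomm_ring) e - H x y * w

theorem mul_mul_sub_eq_zero_of_mul_mul_add_eq_zero {A f g : R → R}
    (hK : ∀ x y w, A x * y * f w + f x * y * g w = 0) (x y u r w : R) :
    f x * y * (f u * r * g w - g u * r * f w) = 0 := by
  linear_combination (norm := noncomm_ring) hK x (y * f u * r) w - hK x y u * (r * f w)

theorem eq_zero_or_mul_mul_eq_of_mul_mul_add_eq_zero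
    (hprime : ∀ x y : R, (∀ r : R, x * r * y = 0) → x = 0 ∨ y = 0) {A f g : R → R}
    (hK : ∀ x y w, A x * y * f w + f x * y * g w = 0) :
    (∀ x, f x = 0) ∨ ∀ u r w, f u * r * g w = g u * r * f w := by
  by_contra! ⟨⟨x, hx⟩, u, r, w, hne⟩
  rcases hprime _ _ (mul_mul_sub_eq_zero_of_mul_mul_add_eq_zero hK x · u r w) with h | h
  · exact hx h
  · exact hne (sub_eq_zero.mp h)

end

theorem stmt8 {R : Type*} [Ring R]
    (hprime : ∀ x y : R, (∀ r : R, x * r * y = 0) → x = 0 ∨ y = 0)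
    (hchar : ∀ x : R, 2 * x = 0 → x = 0)
    (d₁ d₂ : R → R)
    (h₁ : IsDerivation d₁) (h₂ : IsDerivation d₂)
    (h : IsDerivation (fun x => d₁ (d₁ x) + d₁ (d₂ x))) :
    ∀ x y z : R, (d₁ z + d₂ z) * x * d₁ y = 0 := by
  intro x y z
  have K := h₁.cross_terms_mul_eq_zero h₂ (h₁.cross_terms_eq_zero h₂ h)
  rcases eq_zero_or_mul_mul_eq_of_mul_mul_add_eq_zero hprime K with hd₁ | hcomm
  · rw [hd₁ y, mul_zero]
  · exact hchar _ (by linear_combination (norm := noncomm_ring) K z x y - hcomm z x y)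
end

section
/- Let R be a prime ring of characteristic different from 2 and let d₁ and d₂ be derivations on R. If the map d₁² + d₁∘d₂ is again a derivation on R, then d₁ = 0 or d₁ = −d₂. -/
/-!
Put `δ = d₁ + d₂`, so that `d₁² + d₁d₂ = d₁ ∘ δ`. Expanding `d₁ (δ (x y))` shows that `d₁ ∘ δ`
is a derivation exactly when `δ x · d₁ y + d₁ x · δ y = 0`. Replacing `y` by `y z` upgrades this
to `δ x · y · d₁ z + d₁ x · y · δ z = 0`, and a second substitution gives
`(δ x · y · d₁ x - d₁ x · y · δ x) · R · d₁ z = 0`. If `d₁ ≠ 0`, primeness makes the bracket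
vanish, which together with the case `z = x` and `char R ≠ 2` gives `d₁ x · R · δ x = 0`.
Hence every `x` lies in `ker d₁ ∪ ker δ`, and a group is not the union of two proper subgroups.
-/

theorem AddMonoidHom.eq_zero_or_eq_zero_of_forall_eq_zero_or_eq_zero
    {G H K : Type*} [AddGroup G] [AddGroup H] [AddGroup K] (f : G →+ H) (g : G →+ K)
    (h : ∀ x, f x = 0 ∨ g x = 0) : f = 0 ∨ g = 0 := by
  have hcover : ((⊤ : AddSubgroup G) : Set G) ⊆ f.ker ∪ g.ker := fun x _ => h x
  rcases AddSubgroupClass.subset_union.mp hcover with hf | hg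
  · exact .inl (AddMonoidHom.ext fun x => f.mem_ker.mp (hf trivial))
  · exact .inr (AddMonoidHom.ext fun x => g.mem_ker.mp (hg trivial))

namespace IsDerivation

variable {R : Type*} [Ring R] {d δ : R → R}

theorem comp_mul (hd : IsDerivation d) (hδ : IsDerivation δ) (x y : R) :
    d (δ (x * y)) = d (δ x) * y + (δ x * d y + d x * δ y) + x * d (δ y) := by
  simp only [hδ.2, hd.1, hd.2]; abel

theorem mul_mul_add_mul_mul_eq_zero_s9 (hd : IsDerivation d) (hδ : IsDerivation δ)
    (h : ∀ x y, δ x * d y + d x * δ y = 0) (x y z : R) :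
    δ x * y * d z + d x * y * δ z = 0 := by
  calc δ x * y * d z + d x * y * δ z
      = (δ x * d (y * z) + d x * δ (y * z)) - (δ x * d y + d x * δ y) * z := by
        rw [hd.2, hδ.2]; noncomm_ring
    _ = 0 := by rw [h, h, zero_mul, sub_zero]

end IsDerivation

theorem mul_mul_sub_mul_mul_mul_mul_eq_zero {R : Type*} [Ring R] {a b : R → R}
    (h : ∀ x y z, a x * y * b z + b x * y * a z = 0) (x y w z : R) :
    (a x * y * b x - b x * y * a x) * w * b z = 0 := by
  calc (a x * y * b x - b x * y * a x) * w * b z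
      = (a x * (y * b x * w) * b z + b x * (y * b x * w) * a z)
          - b x * y * (a x * w * b z + b x * w * a z) := by noncomm_ring
    _ = 0 := by rw [h, h, mul_zero, sub_zero]

theorem eq_zero_or_eq_zero_of_mul_mul_add_mul_mul_eq_zero {R : Type*} [Ring R]
    (hprime : ∀ x y : R, (∀ r : R, x * r * y = 0) → x = 0 ∨ y = 0)
    (hchar : ∀ x : R, 2 * x = 0 → x = 0) {a b : R →+ R}
    (h : ∀ x y z, a x * y * b z + b x * y * a z = 0) : a = 0 ∨ b = 0 := by
  by_cases hb : b = 0
  · exact .inr hb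
  obtain ⟨z, hz⟩ : ∃ z, b z ≠ 0 := by
    by_contra! hb'
    exact hb (AddMonoidHom.ext hb')
  have hcomm (x y : R) : a x * y * b x = b x * y * a x :=
    sub_eq_zero.mp <|
      (hprime _ _ fun w => mul_mul_sub_mul_mul_mul_mul_eq_zero h x y w z).resolve_right hz
  have hann (x y : R) : b x * y * a x = 0 := by
    apply hchar
    rw [two_mul]
    simpa only [hcomm] using h x y x
  exact (AddMonoidHom.eq_zero_or_eq_zero_of_forall_eq_zero_or_eq_zero b a
    fun x => hprime _ _ (hann x)).symm

theorem stmt9 {R : Type*} [Ring R]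
    (hprime : ∀ x y : R, (∀ r : R, x * r * y = 0) → x = 0 ∨ y = 0)
    (hchar : ∀ x : R, 2 * x = 0 → x = 0)
    (d₁ d₂ : R → R)
    (h₁ : IsDerivation d₁) (h₂ : IsDerivation d₂)
    (h : IsDerivation (fun x => d₁ (d₁ x) + d₁ (d₂ x))) :
    d₁ = 0 ∨ d₁ = -d₂ := by
  have hδ := h₁.add h₂
  have hcomp : IsDerivation (fun x => d₁ (d₁ x + d₂ x)) := by
    simpa only [h₁.1] using h
  have hrel := h₁.mul_mul_add_mul_mul_eq_zero_s9 hδ (h₁.mul_add_mul_eq_zero_of_comp hδ hcomp)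
  rcases eq_zero_or_eq_zero_of_mul_mul_add_mul_mul_eq_zero hprime hchar
      (a := AddMonoidHom.mk' _ hδ.1) (b := AddMonoidHom.mk' _ h₁.1) hrel with hδ0 | hd0
  · right
    funext x
    exact eq_neg_of_add_eq_zero_left (DFunLike.congr_fun hδ0 x)
  · left
    funext x
    exact DFunLike.congr_fun hd0 x
end

section
/- Let R be a prime ring of characteristic different from 2, let ξ, ζ ∈ R, and let (D₁, d₁) and (D₂, d₂) be generalized derivations on R such that the pair (D₁² + D₁∘D₂, d₁² + d₁∘d₂) is a generalized derivation on R. If D₁ is the inner generalized derivation F_{ξ,ζ} : r ↦ ζr + rξ (so that d₁ is the inner derivation t ↦ tξ − ξt), then either D₂ = −F_{ξ,ζ} (and d₂ = −d₁), or ξ lies in the center Z(R) of R. -/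
/-!
Put `F = D₁ + D₂` and `f = d₁ + d₂`. Expanding the Leibniz rule of `D₁² + D₁D₂` on a product
leaves the identity `F x · d₁ y + D₁ x · f y = 0`; substituting products for `y` and then for `x`
turns it into `f w · y · d₁ z + d₁ w · y · f z = 0`. In a prime ring of characteristic `≠ 2` such
a symmetric identity forces `f = 0` or `d₁ = 0`, and once `f = 0` primeness gives `F = 0` unless
`d₁ = 0`. For `d₁ = I_ξ` the alternative `d₁ = 0` says exactly that `ξ` is central.
-/

section PrimeRing

variable {R : Type*} [Ring R]

theorem eq_zero_or_eq_zero_of_mul_mul_add_mul_mul_eq_zero_s11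
    (hprime : ∀ x y : R, (∀ r : R, x * r * y = 0) → x = 0 ∨ y = 0)
    (hchar : ∀ x : R, 2 * x = 0 → x = 0) {f g : R → R}
    (hfg : ∀ w y z, f w * y * g z + g w * y * f z = 0) : f = 0 ∨ g = 0 := by
  by_contra! hne
  obtain ⟨w₀, hw₀⟩ := Function.ne_iff.mp hne.1
  -- `f w₀ · y · (f z t g z - g z t f z)` = (identity at `y f z t`) - (identity at `y`) · `t f z`.
  have hcomm : ∀ z t, f z * t * g z = g z * t * f z := fun z t => by
    refine sub_eq_zero.mp ((hprime (f w₀) _ fun y => ?_).resolve_left hw₀)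
    have hmul : (f w₀ * y * g z + g w₀ * y * f z) * (t * f z) = 0 := by
      rw [hfg w₀ y z, zero_mul]
    linear_combination (norm := noncomm_ring) hfg w₀ (y * f z * t) z - hmul
  have hpoint : ∀ z, f z = 0 ∨ g z = 0 := fun z => hprime _ _ fun y =>
    hchar _ (by linear_combination (norm := noncomm_ring) hfg z y z + hcomm z y)
  have hgw₀ : g w₀ = 0 := (hpoint w₀).resolve_left hw₀
  refine hne.2 (funext fun z => (hprime (f w₀) _ fun y => ?_).resolve_left hw₀)
  simpa [hgw₀] using hfg w₀ y z

end PrimeRing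

namespace IsGenDerivation

variable {R : Type*} [Ring R] {D d D₁ d₁ D₂ d₂ : R → R}

theorem apply_eq_apply_one_mul_add (hD : IsGenDerivation D d) (x : R) :
    D x = D 1 * x + d x := by
  simpa using hD.2.2 1 x

section SqAddComp

variable (h₁ : IsGenDerivation D₁ d₁) (h₂ : IsGenDerivation D₂ d₂)
  (h : IsGenDerivation (fun x => D₁ (D₁ x) + D₁ (D₂ x))
    (fun x => d₁ (d₁ x) + d₁ (d₂ x)))
include h₁ h₂ h

theorem sq_add_comp_identity (x y : R) :
    (D₁ x + D₂ x) * d₁ y + D₁ x * (d₁ y + d₂ y) = 0 := by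
  have hxy := h.2.2 x y
  simp only [h₁.2.2, h₂.2.2, h₁.1] at hxy
  linear_combination (norm := noncomm_ring) hxy

theorem sq_add_comp_identity_mul (x y z : R) :
    (D₁ x + D₂ x) * y * d₁ z + D₁ x * y * (d₁ z + d₂ z) = 0 := by
  have hyz := sq_add_comp_identity h₁ h₂ h x (y * z)
  rw [h₁.2.1.2 y z, h₂.2.1.2 y z] at hyz
  have hy : ((D₁ x + D₂ x) * d₁ y + D₁ x * (d₁ y + d₂ y)) * z = 0 := by
    rw [sq_add_comp_identity h₁ h₂ h x y, zero_mul]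
  linear_combination (norm := noncomm_ring) hyz - hy

theorem sq_add_comp_derivation_identity (w y z : R) :
    (d₁ w + d₂ w) * y * d₁ z + d₁ w * y * (d₁ z + d₂ z) = 0 := by
  have hw := sq_add_comp_identity_mul h₁ h₂ h w y z
  rw [h₁.apply_eq_apply_one_mul_add, h₂.apply_eq_apply_one_mul_add] at hw
  linear_combination (norm := noncomm_ring) hw - sq_add_comp_identity_mul h₁ h₂ h 1 (w * y) z

theorem derivation_eq_zero_or_eq_neg_of_sq_add_comp
    (hprime : ∀ x y : R, (∀ r : R, x * r * y = 0) → x = 0 ∨ y = 0)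
    (hchar : ∀ x : R, 2 * x = 0 → x = 0) :
    d₁ = 0 ∨ (D₂ = -D₁ ∧ d₂ = -d₁) := by
  refine or_iff_not_imp_left.mpr fun hd₁ => ?_
  have hf : ∀ z, d₁ z + d₂ z = 0 := congrFun <|
    (eq_zero_or_eq_zero_of_mul_mul_add_mul_mul_eq_zero_s11 hprime hchar
      (sq_add_comp_derivation_identity h₁ h₂ h)).resolve_right hd₁
  obtain ⟨z₀, hz₀⟩ := Function.ne_iff.mp hd₁
  have hF : ∀ x, D₁ x + D₂ x = 0 := fun x =>
    (hprime _ (d₁ z₀) fun y => by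
      simpa [hf z₀] using sq_add_comp_identity_mul h₁ h₂ h x y z₀).resolve_right hz₀
  exact ⟨funext fun x => eq_neg_of_add_eq_zero_right (hF x),
    funext fun z => eq_neg_of_add_eq_zero_right (hf z)⟩

end SqAddComp

end IsGenDerivation

theorem stmt11 {R : Type*} [Ring R]
    (hprime : ∀ x y : R, (∀ r : R, x * r * y = 0) → x = 0 ∨ y = 0)
    (hchar : ∀ x : R, 2 * x = 0 → x = 0)
    (ξ ζ : R) (D₁ d₁ D₂ d₂ : R → R)
    (h₁ : IsGenDerivation D₁ d₁) (h₂ : IsGenDerivation D₂ d₂)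
    (h : IsGenDerivation (fun x => D₁ (D₁ x) + D₁ (D₂ x)) (fun x => d₁ (d₁ x) + d₁ (d₂ x)))
    (hD₁ : D₁ = fun r => ζ * r + r * ξ) (hd₁ : d₁ = fun t => t * ξ - ξ * t) :
    ((D₂ = fun r => -(ζ * r + r * ξ)) ∧ d₂ = -d₁) ∨ ξ ∈ Set.center R := by
  rcases h₁.derivation_eq_zero_or_eq_neg_of_sq_add_comp h₂ h hprime hchar with hd | ⟨hD, hd⟩
  · refine Or.inr (Semigroup.mem_center_iff.mpr fun g => ?_)
    simpa [hd₁, sub_eq_zero] using congrFun hd g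
  · exact Or.inl ⟨by rw [hD, hD₁]; rfl, hd⟩
end

section
/- Let R be a prime ring of characteristic different from 2 and let (D₁, d₁) and (D₂, d₂) be generalized derivations on R such that the pair (D₁² + D₁∘D₂, d₁² + d₁∘d₂) is a generalized derivation on R. If D₁ is a nonzero left centralizer on R (equivalently, d₁ = 0 and D₁ ≠ 0), then D₂ is a left centralizer on R (equivalently, d₂ = 0). -/
/-!
With `d₁ = 0`, the product rule for `D₁² + D₁D₂` collapses to `D₁ x * d₂ y = 0` for all `x, y`,
since `D₁ (D₂ (x y)) = D₁ (D₂ x) y + D₁ x d₂ y`. Because `D₁` is a left centralizer,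
`D₁ x₀ * r * d₂ y = D₁ (x₀ r) * d₂ y = 0` for every `r`, and primeness with `D₁ x₀ ≠ 0` gives `d₂ = 0`.
-/

def IsLeftCentralizer {R : Type*} [Ring R] (T : R → R) : Prop :=
  ∀ x y, T (x * y) = T x * y

section

variable {R : Type*} [Ring R] {T D d : R → R}

theorem IsLeftCentralizer.eq_zero_of_mul_rule (hT : IsLeftCentralizer T)
    (hTd : ∀ x y, T (x * y) = T x * y + x * d y) (y : R) : d y = 0 := by
  have h := hTd 1 y
  rw [hT] at h
  simpa using h

theorem IsLeftCentralizer.comp_mul_rule (hT : IsLeftCentralizer T)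
    (hadd : ∀ x y, T (x + y) = T x + T y) (hDd : ∀ x y, D (x * y) = D x * y + x * d y)
    (x y : R) : T (D (x * y)) = T (D x) * y + T x * d y := by
  rw [hDd, hadd, hT, hT]

theorem IsLeftCentralizer.apply_mul_eq_zero_of_comp_add (hT : IsLeftCentralizer T)
    (hadd : ∀ x y, T (x + y) = T x + T y) (hDd : ∀ x y, D (x * y) = D x * y + x * d y)
    (hTD : IsLeftCentralizer fun x => T (T x) + T (D x)) (x y : R) : T x * d y = 0 := by
  have h : T (T (x * y)) + T (D (x * y)) = (T (T x) + T (D x)) * y := hTD x y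
  rw [hT x y, hT, hT.comp_mul_rule hadd hDd, add_mul, ← add_assoc] at h
  exact add_eq_left.mp h

theorem IsLeftCentralizer.eq_zero_of_apply_mul_eq_zero
    (hprime : ∀ x y : R, (∀ r : R, x * r * y = 0) → x = 0 ∨ y = 0)
    (hT : IsLeftCentralizer T) (hne : T ≠ 0) {z : R} (hz : ∀ x, T x * z = 0) : z = 0 := by
  obtain ⟨x₀, hx₀⟩ := Function.ne_iff.mp hne
  exact (hprime (T x₀) z fun r => by rw [← hT, hz]).resolve_left hx₀

end

theorem stmt13_general {R : Type*} [Ring R]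
    (hprime : ∀ x y : R, (∀ r : R, x * r * y = 0) → x = 0 ∨ y = 0)
    (D₁ d₁ D₂ d₂ : R → R)
    (h₁ : IsGenDerivation D₁ d₁) (h₂ : IsGenDerivation D₂ d₂)
    (h : IsGenDerivation (fun x => D₁ (D₁ x) + D₁ (D₂ x)) (fun x => d₁ (d₁ x) + d₁ (d₂ x)))
    (hLC : ∀ x y : R, D₁ (x * y) = D₁ x * y) (hne : D₁ ≠ 0) :
    ∀ x y : R, D₂ (x * y) = D₂ x * y := by
  have hD₁ : IsLeftCentralizer D₁ := hLC
  have hd₁ : ∀ y, d₁ y = 0 := hD₁.eq_zero_of_mul_rule h₁.2.2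
  have hcomp : IsLeftCentralizer fun x => D₁ (D₁ x) + D₁ (D₂ x) := fun x y => by
    simpa [hd₁] using h.2.2 x y
  have hd₂ : ∀ y, d₂ y = 0 := fun y =>
    hD₁.eq_zero_of_apply_mul_eq_zero hprime hne fun x =>
      hD₁.apply_mul_eq_zero_of_comp_add h₁.1 h₂.2.2 hcomp x y
  intro x y
  rw [h₂.2.2, hd₂, mul_zero, add_zero]

theorem stmt13 {R : Type*} [Ring R]
    (hprime : ∀ x y : R, (∀ r : R, x * r * y = 0) → x = 0 ∨ y = 0)
    (hchar : ∀ x : R, 2 * x = 0 → x = 0)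
    (D₁ d₁ D₂ d₂ : R → R)
    (h₁ : IsGenDerivation D₁ d₁) (h₂ : IsGenDerivation D₂ d₂)
    (h : IsGenDerivation (fun x => D₁ (D₁ x) + D₁ (D₂ x)) (fun x => d₁ (d₁ x) + d₁ (d₂ x)))
    (hLC : ∀ x y : R, D₁ (x * y) = D₁ x * y) (hne : D₁ ≠ 0) :
    ∀ x y : R, D₂ (x * y) = D₂ x * y :=
  stmt13_general hprime D₁ d₁ D₂ d₂ h₁ h₂ h hLC hne
end
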